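/- arXiv:2311.04486 — 2 statements merged into one kernel-verified Lean document; each statement's English description precedes it below -/
import Mathlib

section
/- Every element of the Fitting subgroup $F(G)$ of a finite group $G$ is a left Engel element: for every $y \in F(G)$ and every $x \in G$, there exists $n \in \mathbb{N}$ such that $[x,{}_n y] = 1$. -/
open scoped commutatorElement

/-- The iterated Engel commutator: `engel x y 0 = x`, `engel x y (n+1) = ⁅engel x y n, y⁆`. -/
def engel {G : Type*} [Group G] (x y : G) : ℕ → G
  | 0 => x
  | n + 1 => ⁅engel x y n, y⁆

/-! The commutator `⁅x, y⁆` already lies in the normal subgroup `F`, and for `x, y` in a subgroup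
`S` the `n`-th Engel commutator lies in the `n`-th term of the lower central series of `S`, which
vanishes when `S` is nilpotent. -/

section Engel

variable {G : Type*} [Group G]

theorem engel_succ' (x y : G) (n : ℕ) : engel x y (n + 1) = engel ⁅x, y⁆ y n := by
  induction n with
  | zero => rfl
  | succ n ih => exact congrArg (⁅·, y⁆) ih

theorem Subgroup.engel_mem_lowerCentralSeries {S : Subgroup G} {x y : G} (hx : x ∈ S) (hy : y ∈ S)
    (n : ℕ) : engel x y n ∈ S.lowerCentralSeries n := by
  induction n with
  | zero => exact hx
  | succ n ih => exact Subgroup.commutator_mem_commutator ih hy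

theorem Subgroup.exists_engel_eq_one_of_isNilpotent {S : Subgroup G} (hS : Group.IsNilpotent S)
    {x y : G} (hx : x ∈ S) (hy : y ∈ S) : ∃ n, engel x y n = 1 := by
  obtain ⟨n, hn⟩ := (S.isNilpotent_iff_lowerCentralSeries).mp hS
  exact ⟨n, by simpa [hn] using S.engel_mem_lowerCentralSeries hx hy n⟩

theorem Subgroup.Normal.commutatorElement_mem_right {N : Subgroup G} (hN : N.Normal) (x : G)
    {y : G} (hy : y ∈ N) : ⁅x, y⁆ ∈ N :=
  Subgroup.commutator_le_right ⊤ N (Subgroup.commutator_mem_commutator (Subgroup.mem_top x) hy)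

end Engel

theorem stmt5_general {G : Type*} [Group G] (F : Subgroup G) (hFnormal : F.Normal)
    (hFnil : Group.IsNilpotent F)
    (y : G) (hy : y ∈ F) (x : G) :
    ∃ n, engel x y n = 1 := by
  obtain ⟨n, hn⟩ :=
    F.exists_engel_eq_one_of_isNilpotent hFnil (hFnormal.commutatorElement_mem_right x hy) hy
  exact ⟨n + 1, by rw [engel_succ', hn]⟩

theorem stmt5 {G : Type*} [Group G] [Finite G] (F : Subgroup G) (hFnormal : F.Normal)
    (hFnil : Group.IsNilpotent F)
    (hFmax : ∀ K : Subgroup G, K.Normal → Group.IsNilpotent K → K ≤ F)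
    (y : G) (hy : y ∈ F) (x : G) :
    ∃ n, engel x y n = 1 :=
  stmt5_general F hFnormal hFnil y hy x
end

section
/- Let $G$ be a finite group whose Fitting subgroup $F(G)$ is nontrivial and suppose a Sylow $p$-subgroup $P$ of $G$ ($p$ odd) does not act fixed-point-freely on $F(G)$: some non-identity $s \in P$ centralizes some non-identity $f' \in F(G)$. Then for every non-identity $x \in P$ and every non-identity $f \in F(G)$, there is a directed path of length at most $4$ from $f$ to $x$ in the Engel-type graph $\Delta(G)$ on $G \setminus \{1\}$. -/
/-!
Nilpotent subgroups are Engel: if `a, b` lie in a nilpotent subgroup `S`, then `[a, ₙ b]` lies in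
the `n`-th term of the lower central series of `S`, which vanishes for large `n`. Both `F` and the
`p`-group `P` are nilpotent, and `s` commutes with `f'`, so `f → f' → s → x` is a path of
length `3` in `Δ(G)`.
-/

open scoped commutatorElement

/-- There is a directed path of length at most `k` from `x` to `y`, staying inside the
vertex set `V`, where `(a,b)` is an arc iff some Engel word `[a, _n b]` is trivial. -/
def engelReach {G : Type*} [Group G] (V : Set G) (k : ℕ) (x y : G) : Prop :=
  ∃ c ≤ k, ∃ f : ℕ → G, f 0 = x ∧ f c = y ∧ (∀ i ≤ c, f i ∈ V) ∧
    ∀ i < c, ∃ n, engel (f i) (f (i + 1)) n = 1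

section Engel

variable {G : Type*} [Group G]

theorem Commute.engel_one_eq_one {a b : G} (h : Commute a b) : engel a b 1 = 1 :=
  commutatorElement_eq_one_iff_commute.mpr h

theorem Subgroup.engel_mem_lowerCentralSeries_s16 {S : Subgroup G} {a b : G} (ha : a ∈ S)
    (hb : b ∈ S) : ∀ n, engel a b n ∈ S.lowerCentralSeries n
  | 0 => ha
  | n + 1 => commutator_mem_commutator (engel_mem_lowerCentralSeries_s16 ha hb n) hb

theorem Subgroup.exists_engel_eq_one {S : Subgroup G} (hS : Group.IsNilpotent S) {a b : G}
    (ha : a ∈ S) (hb : b ∈ S) : ∃ n, engel a b n = 1 := by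
  obtain ⟨n, hn⟩ := (isNilpotent_iff_lowerCentralSeries S).mp hS
  exact ⟨n, by simpa [hn] using engel_mem_lowerCentralSeries_s16 ha hb n⟩

end Engel

namespace engelReach

variable {G : Type*} [Group G] {V : Set G} {k : ℕ} {a b c : G}

theorem refl (ha : a ∈ V) : engelReach V 0 a a :=
  ⟨0, le_rfl, fun _ => a, rfl, rfl, fun _ _ => ha, fun _ hi => absurd hi (Nat.not_lt_zero _)⟩

theorem mono {l : ℕ} (h : engelReach V k a b) (hkl : k ≤ l) : engelReach V l a b := by
  obtain ⟨c, hc, f, h0, hf⟩ := h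
  exact ⟨c, hc.trans hkl, f, h0, hf⟩

theorem snoc (h : engelReach V k a b) (hc : c ∈ V) (hbc : ∃ n, engel b c n = 1) :
    engelReach V (k + 1) a c := by
  obtain ⟨m, hm, f, h0, hfm, hV, harc⟩ := h
  refine ⟨m + 1, by omega, Function.update f (m + 1) c, ?_, by simp, ?_, ?_⟩
  · rwa [Function.update_of_ne (Nat.succ_ne_zero m).symm]
  · intro i hi
    rcases Nat.lt_or_ge i (m + 1) with hlt | hge
    · rw [Function.update_of_ne hlt.ne]
      exact hV i (Nat.lt_succ_iff.mp hlt)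
    · rw [le_antisymm hi hge, Function.update_self]
      exact hc
  · intro i hi
    rw [Function.update_of_ne hi.ne]
    rcases Nat.lt_or_ge i m with hlt | hge
    · rw [Function.update_of_ne (by omega)]
      exact harc i hlt
    · obtain rfl : i = m := by omega
      rw [Function.update_self, hfm]
      exact hbc

end engelReach

theorem stmt16_general {G : Type*} [Group G] [Finite G] (F : Subgroup G)
    (hFnil : Group.IsNilpotent F)
    (p : ℕ) (hp : p.Prime) (P : Sylow p G)
    (s : G) (hs : s ∈ P) (hs1 : s ≠ 1)
    (f' : G) (hf' : f' ∈ F) (hf'1 : f' ≠ 1) (hcomm : Commute s f') :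
    ∀ x ∈ P, x ≠ 1 → ∀ f ∈ F, f ≠ 1 → engelReach {g : G | g ≠ 1} 4 f x := by
  intro x hx hx1 f hf hf1
  have : Fact p.Prime := ⟨hp⟩
  have hPnil : Group.IsNilpotent (P : Subgroup G) := P.isPGroup'.isNilpotent
  have hfs : engelReach {g : G | g ≠ 1} 2 f s :=
    ((engelReach.refl hf1).snoc hf'1 (F.exists_engel_eq_one hFnil hf hf')).snoc hs1
      ⟨1, hcomm.symm.engel_one_eq_one⟩
  exact (hfs.snoc hx1 ((P : Subgroup G).exists_engel_eq_one hPnil hs hx)).mono (by norm_num)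

theorem stmt16 {G : Type*} [Group G] [Finite G] (F : Subgroup G) (hFnormal : F.Normal)
    (hFnil : Group.IsNilpotent F)
    (hFmax : ∀ K : Subgroup G, K.Normal → Group.IsNilpotent K → K ≤ F)
    (hFne : F ≠ ⊥) (p : ℕ) (hp : p.Prime) (hodd : Odd p) (P : Sylow p G)
    (s : G) (hs : s ∈ P) (hs1 : s ≠ 1)
    (f' : G) (hf' : f' ∈ F) (hf'1 : f' ≠ 1) (hcomm : Commute s f') :
    ∀ x ∈ P, x ≠ 1 → ∀ f ∈ F, f ≠ 1 → engelReach {g : G | g ≠ 1} 4 f x :=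
  stmt16_general F hFnil p hp P s hs hs1 f' hf' hf'1 hcomm
end
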